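/- arXiv:2405.13174 — 2 statements merged into one kernel-verified Lean document; each statement's English description precedes it below -/
import Mathlib

section
/- Let x : [0,∞) → ℝ be a continuous function with locally finite total variation and f ∈ C¹(ℝ,ℝ). Then for t > 0: f(x_t) − f(x_0) = ∫_ℝ f'(z) ℓ^z(t) dz, where ℓ^z(t) = Card(I(z) ∩ (0,t]) − Card(D(z) ∩ (0,t]) is the difference between the number of times x increases through level z and decreases through level z during (0,t]. -/
open MeasureTheory Filter Set Function
open scoped ENNReal NNReal

noncomputable section

def Cadlag (x : ℝ → ℝ) : Prop :=
  (∀ u : ℝ, Tendsto x (nhdsWithin u (Ici u)) (nhds (x u))) ∧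
  (∀ u : ℝ, ∃ l : ℝ, Tendsto x (nhdsWithin u (Iio u)) (nhds l))

def jumpAt (x : ℝ → ℝ) (u : ℝ) : ℝ := x u - leftLim x u

def hitAbove (x : ℝ → ℝ) (t y : ℝ) (σ : EReal) : EReal :=
  sInf {u : EReal | ∃ r : ℝ, u = (r : EReal) ∧ σ ≤ (r : EReal) ∧ r ≤ t ∧ y ≤ x r}

def hitBelow (x : ℝ → ℝ) (t y : ℝ) (τ : EReal) : EReal :=
  sInf {u : EReal | ∃ r : ℝ, u = (r : EReal) ∧ τ ≤ (r : EReal) ∧ r ≤ t ∧ x r < y}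

def sigmaSeq (x : ℝ → ℝ) (s t y c : ℝ) : ℕ → EReal
  | 0 => (s : EReal)
  | n + 1 => hitBelow x t (y - c / 2) (hitAbove x t (y + c / 2) (sigmaSeq x s t y c n))

def downcross (x : ℝ → ℝ) (s t y c : ℝ) : ℕ∞ :=
  sSup {n : ℕ∞ | ∃ m : ℕ, n = (m : ℕ∞) ∧ sigmaSeq x s t y c m ≤ (t : EReal)}

def upcross (x : ℝ → ℝ) (s t y c : ℝ) : ℕ∞ :=
  downcross (fun u => - x u) s t (-y) c

def crossNum (x : ℝ → ℝ) (s t y c : ℝ) : ℕ∞ := upcross x s t y c + downcross x s t y c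

def levelDowncross (x : ℝ → ℝ) (s t y : ℝ) : ℕ∞ := ⨆ (c : ℝ) (_ : 0 < c), downcross x s t y c
def levelUpcross (x : ℝ → ℝ) (s t y : ℝ) : ℕ∞ := ⨆ (c : ℝ) (_ : 0 < c), upcross x s t y c
def levelCross (x : ℝ → ℝ) (s t y : ℝ) : ℕ∞ := ⨆ (c : ℝ) (_ : 0 < c), crossNum x s t y c

def LocFiniteVar (x : ℝ → ℝ) : Prop := ∀ a b : ℝ, eVariationOn x (Icc a b) ≠ ⊤

def LocBounded (g : ℝ → ℝ) : Prop := ∀ K : ℝ, ∃ M : ℝ, ∀ z ∈ Icc (-K) K, |g z| ≤ M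

def posVarOn (x : ℝ → ℝ) (s : Set ℝ) : ℝ≥0∞ :=
  ⨆ p : ℕ × { u : ℕ → ℝ // Monotone u ∧ ∀ i, u i ∈ s },
    ∑ i ∈ Finset.range p.1, ENNReal.ofReal (x (p.2.1 (i + 1)) - x (p.2.1 i))

def negVarOn (x : ℝ → ℝ) (s : Set ℝ) : ℝ≥0∞ := posVarOn (fun u => - x u) s


/-- Times at which `x` increases continuously through the level `z`. -/
def incrSet (x : ℝ → ℝ) (z : ℝ) : Set ℝ :=
  {u : ℝ | ContinuousAt x u ∧ x u = z ∧
    ∃ ε > 0, ∀ v : ℝ, |v - u| < ε → (v < u → x v < x u) ∧ (u < v → x u < x v)}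

/-- Times at which `x` decreases continuously through the level `z`. -/
def decrSet (x : ℝ → ℝ) (z : ℝ) : Set ℝ :=
  {u : ℝ | ContinuousAt x u ∧ x u = z ∧
    ∃ ε > 0, ∀ v : ℝ, |v - u| < ε → (v < u → x u < x v) ∧ (u < v → x v < x u)}


def touchPt (x : ℝ → ℝ) (u : ℝ) : Prop :=
  ∃ ε > 0, (∀ v, v ≠ u → |v - u| < ε → x v < x u) ∨ (∀ v, v ≠ u → |v - u| < ε → x u < x v)

lemma sep_countable {q : ℝ} (hq : 0 < q) {S : Set ℝ}
    (hsep : ∀ u ∈ S, ∀ v ∈ S, u < v → q ≤ v - u) : S.Countable := by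
  have key : ∀ a ∈ S, ∀ b ∈ S, a < b → ⌊2 * a / q⌋ ≠ ⌊2 * b / q⌋ := by
    intro a ha b hb hab
    have h1 : q ≤ b - a := hsep a ha b hb hab
    have h2 : 2 * a / q + 2 ≤ 2 * b / q := by
      have e1 : 2 * b / q - 2 * a / q = 2 * (b - a) / q := by ring
      have e2 : (2:ℝ) ≤ 2 * (b - a) / q := by rw [le_div_iff₀ hq]; linarith
      linarith
    have h3 := Int.floor_le_floor h2
    rw [show (2 * a / q + 2 : ℝ) = 2 * a / q + ((2:ℤ):ℝ) by norm_num,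
      Int.floor_add_intCast] at h3
    omega
  apply Set.MapsTo.countable_of_injOn (f := fun u => ⌊2 * u / q⌋)
    (Set.mapsTo_univ _ S) _ Set.countable_univ
  intro u hu v hv huv
  by_contra hne
  rcases Ne.lt_or_gt hne with h | h
  · exact key u hu v hv h huv
  · exact key v hv u hu h huv.symm

lemma countable_touch (x : ℝ → ℝ) : {u | touchPt x u}.Countable := by
  have key : ∀ n : ℕ,
      ({u : ℝ | ∀ v, v ≠ u → |v - u| < 1/((n:ℝ)+1) → x v < x u}.Countable) ∧
      ({u : ℝ | ∀ v, v ≠ u → |v - u| < 1/((n:ℝ)+1) → x u < x v}.Countable) := by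
    intro n
    have hq : (0:ℝ) < 1/((n:ℝ)+1) := by positivity
    constructor
    · apply sep_countable hq
      intro u hu v hv huv
      by_contra hlt
      push_neg at hlt
      have h1 := hu v (ne_of_gt huv) (by rw [abs_sub_lt_iff]; constructor <;> linarith)
      have h2 := hv u (ne_of_lt huv) (by rw [abs_sub_lt_iff]; constructor <;> linarith)
      linarith
    · apply sep_countable hq
      intro u hu v hv huv
      by_contra hlt
      push_neg at hlt
      have h1 := hu v (ne_of_gt huv) (by rw [abs_sub_lt_iff]; constructor <;> linarith)
      have h2 := hv u (ne_of_lt huv) (by rw [abs_sub_lt_iff]; constructor <;> linarith)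
      linarith
  have hsub : {u | touchPt x u} ⊆
      ⋃ n : ℕ, ({u : ℝ | ∀ v, v ≠ u → |v - u| < 1/((n:ℝ)+1) → x v < x u} ∪
        {u : ℝ | ∀ v, v ≠ u → |v - u| < 1/((n:ℝ)+1) → x u < x v}) := by
    intro u hu
    obtain ⟨ε, hε, hcase⟩ := hu
    obtain ⟨n, hn⟩ := exists_nat_one_div_lt hε
    refine Set.mem_iUnion.mpr ⟨n, ?_⟩
    rcases hcase with hmax | hmin
    · exact Or.inl (fun v hv hd => hmax v hv (hd.trans hn))
    · exact Or.inr (fun v hv hd => hmin v hv (hd.trans hn))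
  exact Set.Countable.mono hsub
    (Set.countable_iUnion fun n => ((key n).1.union (key n).2))

lemma evar_sum (x : ℝ → ℝ) {t : ℝ} (ht : 0 < t) (n : ℕ) (hn : 0 < n) (j : ℕ) :
    ∑ k ∈ Finset.range j, eVariationOn x (Icc ((k:ℝ) * (t/n)) ((k+1:ℕ) * (t/n)))
      = eVariationOn x (Icc 0 ((j:ℝ) * (t/n))) := by
  have htn : (0:ℝ) < t / n := by positivity
  induction j with
  | zero => simp [eVariationOn.subsingleton x (by simp : (Icc (0:ℝ) 0).Subsingleton)]
  | succ j ih =>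
      rw [Finset.sum_range_succ, ih]
      have h1 : (0:ℝ) ≤ (j:ℝ) * (t/n) := by positivity
      have h2 : (j:ℝ) * (t/n) ≤ ((j+1:ℕ):ℝ) * (t/n) := by
        apply mul_le_mul_of_nonneg_right _ htn.le; push_cast; linarith
      have := eVariationOn.Icc_add_Icc x (s := univ) h1 h2 (mem_univ _)
      simp only [univ_inter] at this
      exact_mod_cast this

lemma infinite_level_null (x : ℝ → ℝ) (hx : Continuous x) {t : ℝ} (ht : 0 < t)
    (hv : eVariationOn x (Icc 0 t) ≠ ⊤) :
    volume {z : ℝ | {u | u ∈ Icc 0 t ∧ x u = z}.Infinite} = 0 := by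
  set V := eVariationOn x (Icc 0 t) with hV
  -- the approximating counting functions
  set F : ℕ → ℝ → ℝ≥0∞ := fun n z => ∑ k ∈ Finset.range n,
    (x '' Icc ((k:ℝ) * (t/n)) ((k+1:ℕ) * (t/n))).indicator (fun _ => (1:ℝ≥0∞)) z with hF
  have hSmeas : ∀ n k : ℕ, MeasurableSet (x '' Icc ((k:ℝ) * (t/n)) ((k+1:ℕ) * (t/n))) :=
    fun n k => (isCompact_Icc.image hx).measurableSet
  have hFmeas : ∀ n, Measurable (F n) := by
    intro n
    apply Finset.measurable_sum
    intro k _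
    exact Measurable.indicator measurable_const (hSmeas n k)
  -- integral bound
  have hFint : ∀ n, ∫⁻ z, F n z ≤ V := by
    intro n
    rcases Nat.eq_zero_or_pos n with rfl | hn
    · simp [hF]
    simp only [hF]
    rw [lintegral_finset_sum _ (fun k _ => Measurable.indicator measurable_const (hSmeas n k))]
    have key : ∀ k : ℕ, ∫⁻ z, (x '' Icc ((k:ℝ) * (t/n)) ((k+1:ℕ) * (t/n))).indicator (fun _ => (1:ℝ≥0∞)) z
        ≤ eVariationOn x (Icc ((k:ℝ) * (t/n)) ((k+1:ℕ) * (t/n))) := by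
      intro k
      rw [lintegral_indicator (hSmeas n k), setLIntegral_one]
      have htn : (0:ℝ) < t / n := by positivity
      have hle : (k:ℝ) * (t/n) ≤ ((k+1:ℕ):ℝ) * (t/n) := by
        apply mul_le_mul_of_nonneg_right _ htn.le; push_cast; linarith
      have hne : (Icc ((k:ℝ) * (t/n)) ((k+1:ℕ) * (t/n))).Nonempty := ⟨_, left_mem_Icc.mpr hle⟩
      obtain ⟨pM, hpM, hM⟩ := isCompact_Icc.exists_isMaxOn hne hx.continuousOn
      obtain ⟨pm, hpm, hm⟩ := isCompact_Icc.exists_isMinOn hne hx.continuousOn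
      have himg : x '' Icc ((k:ℝ) * (t/n)) ((k+1:ℕ) * (t/n)) ⊆ Icc (x pm) (x pM) := by
        rintro _ ⟨u, hu, rfl⟩
        exact ⟨hm hu, hM hu⟩
      calc volume (x '' Icc ((k:ℝ) * (t/n)) ((k+1:ℕ) * (t/n)))
          ≤ volume (Icc (x pm) (x pM)) := measure_mono himg
        _ = ENNReal.ofReal (x pM - x pm) := Real.volume_Icc
        _ ≤ edist (x pM) (x pm) := by
            rw [edist_dist, Real.dist_eq]
            exact ENNReal.ofReal_le_ofReal (le_abs_self _)
        _ ≤ eVariationOn x (Icc ((k:ℝ) * (t/n)) ((k+1:ℕ) * (t/n))) :=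
            eVariationOn.edist_le x hpM hpm
    calc ∑ k ∈ Finset.range n, ∫⁻ z, (x '' Icc ((k:ℝ) * (t/n)) ((k+1:ℕ) * (t/n))).indicator (fun _ => (1:ℝ≥0∞)) z
        ≤ ∑ k ∈ Finset.range n, eVariationOn x (Icc ((k:ℝ) * (t/n)) ((k+1:ℕ) * (t/n))) :=
          Finset.sum_le_sum (fun k _ => key k)
      _ = eVariationOn x (Icc 0 ((n:ℝ) * (t/n))) := evar_sum x ht n hn n
      _ = V := by rw [hV]; congr 1; congr 1; field_simp
  -- bad z have liminf = ⊤
  have hbad : ∀ z, ({u | u ∈ Icc 0 t ∧ x u = z}.Infinite) →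
      atTop.liminf (fun n => F n z) = ⊤ := by
    intro z hz
    have hev : ∀ m : ℕ, ∀ᶠ n in atTop, (m : ℝ≥0∞) ≤ F n z := by
      intro m
      obtain ⟨P, hPsub, hPcard⟩ := hz.exists_subset_card_eq m
      -- minimal gap
      classical
      obtain ⟨δ, hδ, hgap⟩ : ∃ δ > 0, ∀ u ∈ P, ∀ v ∈ P, u ≠ v → δ ≤ |u - v| := by
        rcases ((P ×ˢ P).filter (fun p => p.1 ≠ p.2)).eq_empty_or_nonempty with hDe | hDne
        · refine ⟨1, one_pos, fun u hu v hv huv => ?_⟩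
          exfalso
          have hmem : (u,v) ∈ (P ×ˢ P).filter (fun p => p.1 ≠ p.2) := by
            simp [Finset.mem_filter, Finset.mem_product, hu, hv, huv]
          rw [hDe] at hmem
          exact Finset.notMem_empty _ hmem
        · refine ⟨((P ×ˢ P).filter (fun p => p.1 ≠ p.2)).inf' hDne (fun p => |p.1 - p.2|), ?_, ?_⟩
          · simp only [gt_iff_lt, Finset.lt_inf'_iff]
            intro p hp
            rw [Finset.mem_filter] at hp
            exact abs_pos.mpr (sub_ne_zero.mpr hp.2)
          · intro u hu v hv huv
            have hmem : (u,v) ∈ (P ×ˢ P).filter (fun p => p.1 ≠ p.2) := by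
              rw [Finset.mem_filter]; exact ⟨Finset.mem_product.mpr ⟨hu, hv⟩, huv⟩
            exact Finset.inf'_le (fun p => |p.1 - p.2|) hmem
      filter_upwards [eventually_ge_atTop (⌊t/δ⌋₊ + 1)] with n hn
      have hn0 : 0 < n := lt_of_lt_of_le (Nat.succ_pos _) hn
      have hmesh : t / n < δ := by
        rw [div_lt_iff₀ (by exact_mod_cast hn0)]
        have h1 : t / δ < (⌊t/δ⌋₊ + 1 : ℕ) := by
          push_cast
          exact Nat.lt_floor_add_one _
        have h2 : ((⌊t/δ⌋₊ + 1 : ℕ) : ℝ) ≤ n := by exact_mod_cast hn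
        have := lt_of_lt_of_le h1 h2
        calc t = (t/δ) * δ := by field_simp
          _ < (n:ℝ) * δ := by apply mul_lt_mul_of_pos_right this hδ
          _ = δ * n := by ring
      -- assignment of points to intervals
      set K : ℝ → ℕ := fun u => min ⌊u * n / t⌋₊ (n-1) with hK
      have hKlt : ∀ u, K u < n := fun u => lt_of_le_of_lt (min_le_right _ _) (by omega)
      have hKmem : ∀ u ∈ Icc 0 t, u ∈ Icc ((K u : ℝ) * (t/n)) ((K u + 1 : ℕ) * (t/n)) := by
        intro u hu
        obtain ⟨hu0, hut⟩ := hu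
        have hnR : (0:ℝ) < n := by exact_mod_cast hn0
        constructor
        · have h1 : (K u : ℝ) ≤ ⌊u * n / t⌋₊ := by exact_mod_cast min_le_left _ _
          have h2 : (⌊u * n / t⌋₊ : ℝ) ≤ u * n / t := Nat.floor_le (by positivity)
          calc (K u : ℝ) * (t/n) ≤ (u * n / t) * (t/n) := by
                apply mul_le_mul_of_nonneg_right (h1.trans h2) (by positivity)
            _ = u := by field_simp
        · rcases le_or_gt ⌊u * n / t⌋₊ (n-1) with hc | hc
          · have hKu : K u = ⌊u * n / t⌋₊ := min_eq_left hc
            have h2 : u * n / t < ⌊u * n / t⌋₊ + 1 := Nat.lt_floor_add_one _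
            rw [hKu]
            have htn : (0:ℝ) < t / n := by positivity
            have e : (u * n / t) * (t/n) = u := by field_simp
            have h3 := mul_lt_mul_of_pos_right h2 htn
            push_cast
            rw [e] at h3
            push_cast at h3
            linarith
          · have hKu : K u = n - 1 := min_eq_right hc.le
            rw [hKu]
            have : (n - 1 + 1 : ℕ) = n := by omega
            rw [this]
            calc u ≤ t := hut
              _ = (n:ℝ) * (t/n) := by field_simp
      -- K is injective on P
      have hKinj : Set.InjOn K P := by
        intro u hu v hv huv
        by_contra hne
        have hgap' := hgap u hu v hv hne
        have huI := hKmem u ⟨(hPsub hu).1.1, (hPsub hu).1.2⟩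
        have hvI := hKmem v ⟨(hPsub hv).1.1, (hPsub hv).1.2⟩
        rw [huv] at huI
        have : |u - v| ≤ t / n := by
          rw [abs_sub_le_iff]
          obtain ⟨hu1, hu2⟩ := huI
          obtain ⟨hv1, hv2⟩ := hvI
          have : ((K v + 1 : ℕ) : ℝ) * (t/n) - (K v : ℝ) * (t/n) = t/n := by
            push_cast; ring
          constructor <;> linarith
        linarith [lt_of_le_of_lt this hmesh]
      -- conclude
      have hsub2 : P.image K ⊆ Finset.range n := by
        intro k hk
        obtain ⟨u, _, rfl⟩ := Finset.mem_image.mp hk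
        exact Finset.mem_range.mpr (hKlt u)
      calc (m : ℝ≥0∞) = ((P.image K).card : ℝ≥0∞) := by
            rw [Finset.card_image_of_injOn (fun a ha b hb => hKinj (by exact_mod_cast ha) (by exact_mod_cast hb)), hPcard]
        _ = ∑ k ∈ P.image K, 1 := by simp
        _ ≤ ∑ k ∈ P.image K,
              (x '' Icc ((k:ℝ) * (t/n)) ((k+1:ℕ) * (t/n))).indicator (fun _ => (1:ℝ≥0∞)) z := by
            apply Finset.sum_le_sum
            intro k hk
            obtain ⟨u, huP, rfl⟩ := Finset.mem_image.mp hk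
            have huL := hPsub huP
            have : z ∈ x '' Icc ((K u:ℝ) * (t/n)) ((K u+1:ℕ) * (t/n)) :=
              ⟨u, hKmem u huL.1, huL.2⟩
            rw [Set.indicator_of_mem this]
        _ ≤ F n z := Finset.sum_le_sum_of_subset hsub2
    apply top_unique
    rw [← ENNReal.iSup_natCast]
    exact iSup_le fun m => le_liminf_of_le (by isBoundedDefault) (hev m)
  -- Fatou
  have hG : Measurable (fun z => atTop.liminf (fun n => F n z)) :=
    Measurable.liminf hFmeas
  have hGint : ∫⁻ z, atTop.liminf (fun n => F n z) ≠ ⊤ := by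
    apply ne_top_of_le_ne_top hv
    calc ∫⁻ z, atTop.liminf (fun n => F n z) ≤ atTop.liminf (fun n => ∫⁻ z, F n z) :=
          lintegral_liminf_le hFmeas
      _ ≤ V := by
          apply liminf_le_of_le (by isBoundedDefault)
          intro b hb
          obtain ⟨n, hn⟩ := hb.exists
          exact hn.trans (hFint n)
  have hae := ae_lt_top hG hGint
  rw [ae_iff] at hae
  apply measure_mono_null _ hae
  intro z hz
  simp only [Set.mem_setOf_eq, not_lt, top_le_iff]
  exact hbad z hz


lemma no_cross {x : ℝ → ℝ} (hx : Continuous x) {z c d v w : ℝ}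
    (hv : v ∈ Icc c d) (hw : w ∈ Icc c d)
    (hnz : ∀ u ∈ Icc c d, x u ≠ z) (h1 : x v < z) (h2 : z < x w) : False := by
  have hz : z ∈ uIcc (x v) (x w) := by rw [Set.mem_uIcc]; left; exact ⟨h1.le, h2.le⟩
  obtain ⟨u, hu, hxu⟩ := intermediate_value_uIcc (hx.continuousOn) hz
  exact hnz u (uIcc_subset_Icc hv hw hu) hxu

lemma e_add {z p q r : ℝ} (hp : p ≠ z) (hq : q ≠ z) (hr : r ≠ z) :
    ((if p < z ∧ z < r then (1:ℤ) else 0) - (if r < z ∧ z < p then 1 else 0))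
    = ((if p < z ∧ z < q then (1:ℤ) else 0) - (if q < z ∧ z < p then 1 else 0))
    + ((if q < z ∧ z < r then (1:ℤ) else 0) - (if r < z ∧ z < q then 1 else 0)) := by
  rcases hp.lt_or_gt with h1 | h1 <;> rcases hq.lt_or_gt with h2 | h2 <;>
    rcases hr.lt_or_gt with h3 | h3 <;>
    simp [h1, h2, h3, h1.not_gt, h2.not_gt, h3.not_gt]

lemma cross_count (x : ℝ → ℝ) (hx : Continuous x) (z : ℝ) :
    ∀ n : ℕ, ∀ a b : ℝ, a ≤ b → x a ≠ z → x b ≠ z →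
    {u | u ∈ Icc a b ∧ x u = z}.Finite →
    {u | u ∈ Icc a b ∧ x u = z}.ncard ≤ n →
    (∀ u ∈ Ioo a b, x u = z → ¬ touchPt x u) →
    ((incrSet x z ∩ Ioc a b).ncard : ℤ) - ((decrSet x z ∩ Ioc a b).ncard : ℤ)
      = (if x a < z ∧ z < x b then 1 else 0) - (if x b < z ∧ z < x a then 1 else 0) := by
  intro n
  induction n with
  | zero =>
      intro a b hab ha hb hL hcard htouch
      -- level set is empty
      have hSempty : {u | u ∈ Icc a b ∧ x u = z} = ∅ := by
        rcases Set.eq_empty_or_nonempty {u | u ∈ Icc a b ∧ x u = z} with h | h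
        · exact h
        · exfalso
          have := Set.ncard_pos hL |>.mpr h
          omega
      have hIempty : incrSet x z ∩ Ioc a b = ∅ := by
        ext u
        simp only [Set.mem_inter_iff, Set.mem_empty_iff_false, iff_false, not_and]
        intro hi hu
        have : u ∈ {u | u ∈ Icc a b ∧ x u = z} := ⟨⟨hu.1.le, hu.2⟩, hi.2.1⟩
        rw [hSempty] at this; exact this
      have hDempty : decrSet x z ∩ Ioc a b = ∅ := by
        ext u
        simp only [Set.mem_inter_iff, Set.mem_empty_iff_false, iff_false, not_and]
        intro hi hu
        have : u ∈ {u | u ∈ Icc a b ∧ x u = z} := ⟨⟨hu.1.le, hu.2⟩, hi.2.1⟩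
        rw [hSempty] at this; exact this
      have h1 : ¬ (x a < z ∧ z < x b) := by
        rintro ⟨h1, h2⟩
        obtain ⟨u, hu, hxu⟩ := intermediate_value_Icc hab hx.continuousOn ⟨h1.le, h2.le⟩
        have : u ∈ {u | u ∈ Icc a b ∧ x u = z} := ⟨hu, hxu⟩
        rw [hSempty] at this; exact this
      have h2 : ¬ (x b < z ∧ z < x a) := by
        rintro ⟨h1, h2⟩
        obtain ⟨u, hu, hxu⟩ := intermediate_value_Icc' hab hx.continuousOn ⟨h1.le, h2.le⟩
        have : u ∈ {u | u ∈ Icc a b ∧ x u = z} := ⟨hu, hxu⟩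
        rw [hSempty] at this; exact this
      rw [hIempty, hDempty, if_neg h1, if_neg h2]
      simp
  | succ n IH =>
      intro a b hab ha hb hL hcard htouch
      set S := {u | u ∈ Icc a b ∧ x u = z} with hS
      rcases Set.eq_empty_or_nonempty S with hSe | hSne
      · -- use the zero case argument again, via IH with empty set
        exact IH a b hab ha hb hL (by rw [← hS, hSe]; simp) htouch
      -- u0 : the largest level point
      have hbdd : BddAbove S := hL.bddAbove
      set u0 := sSup S with hu0
      have hu0S : u0 ∈ S := Set.Nonempty.csSup_mem hSne hL
      have hu0b : u0 ≤ b := hu0S.1.2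
      have hau0 : a ≤ u0 := hu0S.1.1
      have hxu0 : x u0 = z := hu0S.2
      have hau0' : a < u0 := lt_of_le_of_ne hau0 (fun h => ha (by rw [h]; exact hxu0))
      have hu0b' : u0 < b := lt_of_le_of_ne hu0b (fun h => hb (by rw [← h]; exact hxu0))
      -- the cut point c
      set S' := S \ {u0} with hS'
      set u' := sSup (insert a S') with hu'
      have hins : (insert a S').Finite := (hL.subset Set.diff_subset).insert a
      have hinsne : (insert a S').Nonempty := ⟨a, Set.mem_insert _ _⟩
      have hu'mem : u' ∈ insert a S' := Set.Nonempty.csSup_mem hinsne hins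
      have hu'lt : u' < u0 := by
        rcases hu'mem with h | h
        · rw [h]; exact hau0'
        · rcases lt_of_le_of_ne (le_csSup hbdd h.1) h.2 with h'
          exact h'
      have hau' : a ≤ u' := le_csSup hins.bddAbove (Set.mem_insert _ _)
      set c := (u' + u0) / 2 with hc
      have hcu0 : c < u0 := by rw [hc]; linarith
      have hu'c : u' < c := by rw [hc]; linarith
      have hac : a < c := lt_of_le_of_lt hau' hu'c
      have hcb : c < b := lt_trans hcu0 hu0b'
      have hxc : x c ≠ z := by
        intro h
        have hcS : c ∈ S := ⟨⟨hac.le, hcb.le⟩, h⟩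
        have : c ∈ S' := ⟨hcS, fun h' => absurd (h' ▸ hcu0) (lt_irrefl _)⟩
        have := le_csSup hins.bddAbove (Set.mem_insert_of_mem a this)
        linarith
      -- in (c, b], the only level point is u0
      have honly : ∀ v ∈ Ioc c b, x v = z → v = u0 := by
        intro v hv hxv
        have hvS : v ∈ S := ⟨⟨le_trans hac.le hv.1.le, hv.2⟩, hxv⟩
        by_contra hne
        have : v ∈ S' := ⟨hvS, hne⟩
        have := le_csSup hins.bddAbove (Set.mem_insert_of_mem a this)
        linarith [hv.1]
      -- sign facts on the left of u0 (in [c, u0))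
      have hleftlt : x c < z → ∀ v, c ≤ v → v < u0 → x v < z := by
        intro hA v h1 h2
        by_contra hvz
        push_neg at hvz
        have hvne : x v ≠ z := by
          rcases eq_or_lt_of_le h1 with h | h
          · rw [← h]; exact hxc
          · intro he
            exact absurd (honly v ⟨h, le_trans h2.le hu0b⟩ he) (fun hh => absurd (hh ▸ h2) (lt_irrefl _))
        have hnz : ∀ u ∈ Icc c v, x u ≠ z := by
          intro u hu
          rcases eq_or_lt_of_le hu.1 with h | h
          · rw [← h]; exact hxc
          · intro he
            have := honly u ⟨h, le_trans (le_trans hu.2 h2.le) hu0b⟩ he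
            rw [this] at hu
            linarith [hu.2]
        exact no_cross hx (left_mem_Icc.mpr h1) (right_mem_Icc.mpr h1) hnz hA
          (lt_of_le_of_ne hvz (Ne.symm hvne))
      have hleftgt : z < x c → ∀ v, c ≤ v → v < u0 → z < x v := by
        intro hA v h1 h2
        by_contra hvz
        push_neg at hvz
        have hvne : x v ≠ z := by
          rcases eq_or_lt_of_le h1 with h | h
          · rw [← h]; exact hxc
          · intro he
            exact absurd (honly v ⟨h, le_trans h2.le hu0b⟩ he) (fun hh => absurd (hh ▸ h2) (lt_irrefl _))
        have hnz : ∀ u ∈ Icc c v, x u ≠ z := by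
          intro u hu
          rcases eq_or_lt_of_le hu.1 with h | h
          · rw [← h]; exact hxc
          · intro he
            have := honly u ⟨h, le_trans (le_trans hu.2 h2.le) hu0b⟩ he
            rw [this] at hu
            linarith [hu.2]
        exact no_cross hx (right_mem_Icc.mpr h1) (left_mem_Icc.mpr h1) hnz
          (lt_of_le_of_ne hvz hvne) hA
      -- sign facts on the right of u0 (in (u0, b])
      have hrightlt : x b < z → ∀ v, u0 < v → v ≤ b → x v < z := by
        intro hB v h1 h2
        by_contra hvz
        push_neg at hvz
        have hvne : x v ≠ z := by
          intro he
          exact absurd (honly v ⟨lt_trans hcu0 h1, h2⟩ he)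
            (fun hh => absurd (hh ▸ h1) (lt_irrefl _))
        have hnz : ∀ u ∈ Icc v b, x u ≠ z := by
          intro u hu he
          have := honly u ⟨lt_trans hcu0 (lt_of_lt_of_le h1 hu.1), hu.2⟩ he
          rw [this] at hu
          linarith [hu.1]
        exact no_cross hx (right_mem_Icc.mpr h2) (left_mem_Icc.mpr h2) hnz hB
          (lt_of_le_of_ne hvz (Ne.symm hvne))
      have hrightgt : z < x b → ∀ v, u0 < v → v ≤ b → z < x v := by
        intro hB v h1 h2
        by_contra hvz
        push_neg at hvz
        have hvne : x v ≠ z := by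
          intro he
          exact absurd (honly v ⟨lt_trans hcu0 h1, h2⟩ he)
            (fun hh => absurd (hh ▸ h1) (lt_irrefl _))
        have hnz : ∀ u ∈ Icc v b, x u ≠ z := by
          intro u hu he
          have := honly u ⟨lt_trans hcu0 (lt_of_lt_of_le h1 hu.1), hu.2⟩ he
          rw [this] at hu
          linarith [hu.1]
        exact no_cross hx (left_mem_Icc.mpr h2) (right_mem_Icc.mpr h2) hnz
          (lt_of_le_of_ne hvz hvne) hB
      -- same-sign cases are impossible (u0 would be a touch point)
      have hu0I : u0 ∈ Ioo a b := ⟨hau0', hu0b'⟩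
      have hnotsame : ¬ ((x c < z ∧ x b < z) ∨ (z < x c ∧ z < x b)) := by
        intro hsame
        apply htouch u0 hu0I hxu0
        refine ⟨min (u0 - c) (b - u0), lt_min (by linarith) (by linarith), ?_⟩
        rcases hsame with ⟨hA, hB⟩ | ⟨hA, hB⟩
        · left
          intro v hvne hvd
          rw [abs_sub_lt_iff] at hvd
          rw [hxu0]
          rcases lt_or_gt_of_ne hvne with h | h
          · exact hleftlt hA v (by have := hvd.2; have := min_le_left (u0-c) (b-u0); linarith) h
          · exact hrightlt hB v h (by have := hvd.1; have := min_le_right (u0-c) (b-u0); linarith)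
        · right
          intro v hvne hvd
          rw [abs_sub_lt_iff] at hvd
          rw [hxu0]
          rcases lt_or_gt_of_ne hvne with h | h
          · exact hleftgt hA v (by have := hvd.2; have := min_le_left (u0-c) (b-u0); linarith) h
          · exact hrightgt hB v h (by have := hvd.1; have := min_le_right (u0-c) (b-u0); linarith)
      -- set splitting
      have hsplit : ∀ T : Set ℝ, T ∩ Ioc a b = (T ∩ Ioc a c) ∪ (T ∩ Ioc c b) := by
        intro T
        rw [← Set.inter_union_distrib_left, Set.Ioc_union_Ioc_eq_Ioc hac.le hcb.le]
      have hdisj : ∀ T : Set ℝ, Disjoint (T ∩ Ioc a c) (T ∩ Ioc c b) := by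
        intro T
        rw [Set.disjoint_left]
        rintro u ⟨_, _, h1⟩ ⟨_, h2, _⟩
        linarith
      have hIfin : ∀ d e : ℝ, (incrSet x z ∩ Ioc d e ∩ Icc a b).Finite := by
        intro d e
        apply hL.subset
        rintro u ⟨⟨hi, _⟩, hu⟩
        exact ⟨hu, hi.2.1⟩
      -- finiteness of all pieces
      have hfin1 : (incrSet x z ∩ Ioc a c).Finite := by
        apply hL.subset
        rintro u ⟨hi, hu⟩
        exact ⟨⟨hu.1.le, le_trans hu.2 hcb.le⟩, hi.2.1⟩
      have hfin2 : (incrSet x z ∩ Ioc c b).Finite := by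
        apply hL.subset
        rintro u ⟨hi, hu⟩
        exact ⟨⟨le_trans hac.le hu.1.le, hu.2⟩, hi.2.1⟩
      have hfin3 : (decrSet x z ∩ Ioc a c).Finite := by
        apply hL.subset
        rintro u ⟨hi, hu⟩
        exact ⟨⟨hu.1.le, le_trans hu.2 hcb.le⟩, hi.2.1⟩
      have hfin4 : (decrSet x z ∩ Ioc c b).Finite := by
        apply hL.subset
        rintro u ⟨hi, hu⟩
        exact ⟨⟨le_trans hac.le hu.1.le, hu.2⟩, hi.2.1⟩
      -- IH on [a, c]
      have hLac : {u | u ∈ Icc a c ∧ x u = z}.Finite := by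
        apply hL.subset
        rintro u ⟨hu, hxu⟩
        exact ⟨⟨hu.1, le_trans hu.2 hcb.le⟩, hxu⟩
      have hcardac : {u | u ∈ Icc a c ∧ x u = z}.ncard ≤ n := by
        have hsub : {u | u ∈ Icc a c ∧ x u = z} ⊆ S \ {u0} := by
          rintro u ⟨hu, hxu⟩
          refine ⟨⟨⟨hu.1, le_trans hu.2 hcb.le⟩, hxu⟩, ?_⟩
          intro h
          rw [Set.mem_singleton_iff] at h
          rw [h] at hu
          linarith [hu.2]
        have h1 : {u | u ∈ Icc a c ∧ x u = z}.ncard ≤ (S \ {u0}).ncard :=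
          Set.ncard_le_ncard hsub (hL.subset Set.diff_subset)
        have h2 : (S \ {u0}).ncard = S.ncard - 1 := Set.ncard_diff_singleton_of_mem hu0S
        have h3 : 0 < S.ncard := (Set.ncard_pos hL).mpr hSne
        omega
      have htouchac : ∀ u ∈ Ioo a c, x u = z → ¬ touchPt x u := by
        intro u hu
        exact htouch u ⟨hu.1, lt_trans hu.2 hcb⟩
      have hIH := IH a c hac.le ha hxc hLac hcardac htouchac
      -- now the two possible cases
      rcases lt_or_gt_of_ne hxc with hA | hA <;> rcases lt_or_gt_of_ne hb with hB | hB
      -- case x c < z, x b < z : impossible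
      · exact absurd (Or.inl ⟨hA, hB⟩) hnotsame
      -- case x c < z, z < x b : u0 is an upcrossing
      · have hu0incr : u0 ∈ incrSet x z := by
          refine ⟨hx.continuousAt, hxu0, min (u0 - c) (b - u0), lt_min (by linarith) (by linarith), ?_⟩
          intro v hvd
          rw [abs_sub_lt_iff] at hvd
          constructor
          · intro hv
            rw [hxu0]
            exact hleftlt hA v (by have := hvd.2; have := min_le_left (u0-c) (b-u0); linarith) hv
          · intro hv
            rw [hxu0]
            exact hrightgt hB v hv (by have := hvd.1; have := min_le_right (u0-c) (b-u0); linarith)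
        have hIcb : incrSet x z ∩ Ioc c b = {u0} := by
          apply Set.Subset.antisymm
          · rintro u ⟨hi, hu⟩
            exact honly u hu hi.2.1
          · rintro u hu
            rw [Set.mem_singleton_iff] at hu
            rw [hu]
            exact ⟨hu0incr, hcu0, hu0b⟩
        have hDcb : decrSet x z ∩ Ioc c b = ∅ := by
          rw [Set.eq_empty_iff_forall_notMem]
          rintro u ⟨hd, hu⟩
          have : u = u0 := honly u hu hd.2.1
          subst this
          obtain ⟨_, _, ε', hε', hprop⟩ := hd
          set v := u0 + min ε' (b - u0) / 2 with hv
          have hmin : 0 < min ε' (b - u0) := lt_min hε' (by linarith)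
          have h1 : u0 < v := by rw [hv]; linarith
          have h2 : |v - u0| < ε' := by
            rw [hv, abs_of_pos (by linarith)]
            have := min_le_left ε' (b - u0)
            linarith
          have h3 : v ≤ b := by
            rw [hv]
            have := min_le_right ε' (b - u0)
            linarith
          have h4 := (hprop v h2).2 h1
          have h5 := hrightgt hB v h1 h3
          rw [hxu0] at h4
          linarith
        have hn2 : (incrSet x z ∩ Ioc a b).ncard = (incrSet x z ∩ Ioc a c).ncard + 1 := by
          rw [hsplit (incrSet x z), Set.ncard_union_eq (hdisj _) hfin1 hfin2, hIcb,
            Set.ncard_singleton]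
        have hn3 : (decrSet x z ∩ Ioc a b).ncard = (decrSet x z ∩ Ioc a c).ncard := by
          rw [hsplit (decrSet x z), Set.ncard_union_eq (hdisj _) hfin3 hfin4, hDcb,
            Set.ncard_empty]
          omega
        rw [hn2, hn3, e_add ha hxc hb, ← hIH,
          if_pos ⟨hA, hB⟩, if_neg (by rintro ⟨h1, _⟩; linarith)]
        push_cast
        ring
      -- case z < x c, x b < z : u0 is a downcrossing
      · have hu0decr : u0 ∈ decrSet x z := by
          refine ⟨hx.continuousAt, hxu0, min (u0 - c) (b - u0), lt_min (by linarith) (by linarith), ?_⟩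
          intro v hvd
          rw [abs_sub_lt_iff] at hvd
          constructor
          · intro hv
            rw [hxu0]
            exact hleftgt hA v (by have := hvd.2; have := min_le_left (u0-c) (b-u0); linarith) hv
          · intro hv
            rw [hxu0]
            exact hrightlt hB v hv (by have := hvd.1; have := min_le_right (u0-c) (b-u0); linarith)
        have hDcb : decrSet x z ∩ Ioc c b = {u0} := by
          apply Set.Subset.antisymm
          · rintro u ⟨hd, hu⟩
            exact honly u hu hd.2.1
          · rintro u hu
            rw [Set.mem_singleton_iff] at hu
            rw [hu]
            exact ⟨hu0decr, hcu0, hu0b⟩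
        have hIcb : incrSet x z ∩ Ioc c b = ∅ := by
          rw [Set.eq_empty_iff_forall_notMem]
          rintro u ⟨hi, hu⟩
          have : u = u0 := honly u hu hi.2.1
          subst this
          obtain ⟨_, _, ε', hε', hprop⟩ := hi
          set v := u0 + min ε' (b - u0) / 2 with hv
          have hmin : 0 < min ε' (b - u0) := lt_min hε' (by linarith)
          have h1 : u0 < v := by rw [hv]; linarith
          have h2 : |v - u0| < ε' := by
            rw [hv, abs_of_pos (by linarith)]
            have := min_le_left ε' (b - u0)
            linarith
          have h3 : v ≤ b := by
            rw [hv]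
            have := min_le_right ε' (b - u0)
            linarith
          have h4 := (hprop v h2).2 h1
          have h5 := hrightlt hB v h1 h3
          rw [hxu0] at h4
          linarith
        have hn2 : (incrSet x z ∩ Ioc a b).ncard = (incrSet x z ∩ Ioc a c).ncard := by
          rw [hsplit (incrSet x z), Set.ncard_union_eq (hdisj _) hfin1 hfin2, hIcb,
            Set.ncard_empty]
          omega
        have hn3 : (decrSet x z ∩ Ioc a b).ncard = (decrSet x z ∩ Ioc a c).ncard + 1 := by
          rw [hsplit (decrSet x z), Set.ncard_union_eq (hdisj _) hfin3 hfin4, hDcb,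
            Set.ncard_singleton]
        rw [hn2, hn3, e_add ha hxc hb, ← hIH,
          if_neg (by rintro ⟨_, h2⟩; linarith), if_pos ⟨hB, hA⟩]
        push_cast
        ring
      -- case z < x c, z < x b : impossible
      · exact absurd (Or.inr ⟨hA, hB⟩) hnotsame

/-- for continuous `x` of locally finite variation and `f ∈ C¹`,
`f(x_t) - f(x_0) = ∫_ℝ f'(z) ℓ^z(t) dz` with
`ℓ^z(t) = Card(I(z) ∩ (0,t]) - Card(D(z) ∩ (0,t])`. -/
theorem change_of_variable_C1 (x : ℝ → ℝ) (hx : Continuous x) (hv : LocFiniteVar x)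
    (f : ℝ → ℝ) (hf : ContDiff ℝ 1 f) (t : ℝ) (ht : 0 < t) :
    f (x t) - f (x 0) =
      ∫ z : ℝ, deriv f z * ((((incrSet x z ∩ Ioc 0 t).encard : ℝ≥0∞)).toReal
          - (((decrSet x z ∩ Ioc 0 t).encard : ℝ≥0∞)).toReal) := by
  classical
  -- the three null sets
  set N1 : Set ℝ := x '' {u | touchPt x u} with hN1
  set N2 : Set ℝ := {z : ℝ | {u | u ∈ Icc 0 t ∧ x u = z}.Infinite} with hN2
  set N3 : Set ℝ := ({x 0, x t} : Set ℝ) with hN3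
  have hN1null : volume N1 = 0 :=
    Set.Countable.measure_zero ((countable_touch x).image x) volume
  have hN2null : volume N2 = 0 := infinite_level_null x hx ht (hv 0 t)
  have hN3null : volume N3 = 0 := by
    rw [hN3]
    exact measure_union_null (measure_singleton (x 0)) (measure_singleton (x t))
  have hae : ∀ᵐ z : ℝ, z ∉ N1 ∪ N2 ∪ N3 := by
    rw [ae_iff]
    have hcompl : {z : ℝ | ¬ z ∉ N1 ∪ N2 ∪ N3} = N1 ∪ N2 ∪ N3 := by
      ext z; exact not_not
    rw [hcompl]
    exact measure_union_null (measure_union_null hN1null hN2null) hN3null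
  -- the signed indicator
  set e : ℝ → ℝ := fun z =>
    (if x 0 < z ∧ z < x t then (1:ℝ) else 0) - (if x t < z ∧ z < x 0 then 1 else 0) with he
  -- a.e. identity of integrands
  have hcongr : (fun z : ℝ => deriv f z * ((((incrSet x z ∩ Ioc 0 t).encard : ℝ≥0∞)).toReal
          - (((decrSet x z ∩ Ioc 0 t).encard : ℝ≥0∞)).toReal))
      =ᵐ[volume] (fun z => deriv f z * e z) := by
    filter_upwards [hae] with z hz
    have hz1 : z ∉ N1 := fun h => hz (Or.inl (Or.inl h))
    have hz2 : z ∉ N2 := fun h => hz (Or.inl (Or.inr h))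
    have hz3 : z ∉ N3 := fun h => hz (Or.inr h)
    have ha : x 0 ≠ z := by
      intro h
      exact hz3 (by rw [hN3]; exact Set.mem_insert_iff.mpr (Or.inl h.symm))
    have hb : x t ≠ z := by
      intro h
      exact hz3 (by
        rw [hN3]
        exact Set.mem_insert_iff.mpr (Or.inr (Set.mem_singleton_iff.mpr h.symm)))
    have hfin : {u | u ∈ Icc 0 t ∧ x u = z}.Finite := by
      rw [← Set.not_infinite]
      exact hz2
    have htouch : ∀ u ∈ Ioo 0 t, x u = z → ¬ touchPt x u := by
      intro u _ hxu htp
      exact hz1 ⟨u, htp, hxu⟩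
    have hcc := cross_count x hx z {u | u ∈ Icc 0 t ∧ x u = z}.ncard 0 t ht.le ha hb
      hfin le_rfl htouch
    have hfinI : (incrSet x z ∩ Ioc 0 t).Finite := by
      apply hfin.subset
      rintro u ⟨hi, hu⟩
      exact ⟨⟨hu.1.le, hu.2⟩, hi.2.1⟩
    have hfinD : (decrSet x z ∩ Ioc 0 t).Finite := by
      apply hfin.subset
      rintro u ⟨hi, hu⟩
      exact ⟨⟨hu.1.le, hu.2⟩, hi.2.1⟩
    have e1 : ((((incrSet x z ∩ Ioc 0 t).encard : ℝ≥0∞))).toReal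
        = ((incrSet x z ∩ Ioc 0 t).ncard : ℝ) := by
      rw [← hfinI.cast_ncard_eq]; simp
    have e2 : ((((decrSet x z ∩ Ioc 0 t).encard : ℝ≥0∞))).toReal
        = ((decrSet x z ∩ Ioc 0 t).ncard : ℝ) := by
      rw [← hfinD.cast_ncard_eq]; simp
    have hval : ((incrSet x z ∩ Ioc 0 t).ncard : ℝ) - ((decrSet x z ∩ Ioc 0 t).ncard : ℝ)
        = e z := by
      simp only [he]
      by_cases h1 : x 0 < z ∧ z < x t <;> by_cases h2 : x t < z ∧ z < x 0 <;>
        simp only [h1, h2, if_true, if_false] at hcc ⊢ <;> exact_mod_cast hcc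
    rw [e1, e2, hval]
  rw [integral_congr_ae hcongr]
  -- now compute the integral of the signed indicator
  have hderiv : Continuous (deriv f) := hf.continuous_deriv le_rfl
  rcases le_or_gt (x 0) (x t) with hpq | hpq
  · have heq : (fun z => deriv f z * e z) = (Ioo (x 0) (x t)).indicator (deriv f) := by
      funext z
      by_cases hmem : z ∈ Ioo (x 0) (x t)
      · rw [Set.indicator_of_mem hmem]
        simp only [he]
        rw [if_pos ⟨hmem.1, hmem.2⟩, if_neg (by rintro ⟨h2, h3⟩; linarith [hmem.1, hmem.2])]
        ring
      · rw [Set.indicator_of_notMem hmem]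
        simp only [he]
        rw [Set.mem_Ioo] at hmem
        rw [if_neg hmem, if_neg (by rintro ⟨h2, h3⟩; linarith)]
        ring
    rw [heq, integral_indicator measurableSet_Ioo, ← integral_Ioc_eq_integral_Ioo,
      ← intervalIntegral.integral_of_le hpq]
    exact (intervalIntegral.integral_deriv_eq_sub
      (fun y _ => (hf.differentiable one_ne_zero).differentiableAt)
      (hderiv.intervalIntegrable _ _)).symm
  · have heq : (fun z => deriv f z * e z)
        = fun z => - (Ioo (x t) (x 0)).indicator (deriv f) z := by
      funext z
      by_cases hmem : z ∈ Ioo (x t) (x 0)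
      · rw [Set.indicator_of_mem hmem]
        simp only [he]
        rw [if_neg (by rintro ⟨h2, h3⟩; linarith [hmem.1, hmem.2]), if_pos ⟨hmem.1, hmem.2⟩]
        ring
      · rw [Set.indicator_of_notMem hmem]
        simp only [he]
        rw [Set.mem_Ioo] at hmem
        rw [if_neg hmem, if_neg (by rintro ⟨h2, h3⟩; linarith)]
        ring
    rw [heq, integral_neg, integral_indicator measurableSet_Ioo, ← integral_Ioc_eq_integral_Ioo,
      ← intervalIntegral.integral_of_le hpq.le]
    rw [intervalIntegral.integral_deriv_eq_sub
      (fun y _ => (hf.differentiable one_ne_zero).differentiableAt)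
      (hderiv.intervalIntegrable _ _)]
    ring
end
end

section
/- Define x : [0,∞) → ℝ by x(t) = (1 + (−1)^{⌊1/(1−t)⌋²})/(2⌊1/(1−t)⌋²) for t ∈ [0,1) and x(t) = 0 for t ≥ 1, and f : ℝ → ℝ by f(y) = √y for y ≥ 0, f(y) = 0 for y < 0. Then x is càdlàg with finite total variation on [0,1], f is absolutely continuous (but not locally Lipschitz), and the net Σ_{0<s≤1, Δx_s≠0} (f(x_s) − f(x_{s−})) does not converge: the sum of positive parts Σ (f(x_s) − f(x_{s−}))_+ is infinite. -/
open MeasureTheory Filter Set Function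
open scoped ENNReal NNReal

noncomputable section

/-- The counterexample function: jumps between `1/(2n)²` and `0` accumulating at `t = 1`. -/
def xEx : ℝ → ℝ := fun t =>
  if t < 1 then
    (1 + (-1 : ℝ) ^ (⌊1 / (1 - t)⌋ ^ 2)) / (2 * (⌊1 / (1 - t)⌋ : ℝ) ^ 2)
  else 0

/-- `f(y) = √y` for `y ≥ 0`, `f(y) = 0` otherwise. -/
def fEx : ℝ → ℝ := fun y => if 0 ≤ y then Real.sqrt y else 0

/-! ### Auxiliary lemmas -/


lemma xEx_eval {n : ℕ} {t : ℝ} (ht : t < 1) (hf : ⌊1 / (1 - t)⌋ = (n : ℤ)) :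
    xEx t = if Even n then 1 / (n : ℝ) ^ 2 else 0 := by
  have : ((-1 : ℝ) ^ (⌊1 / (1 - t)⌋ ^ 2)) = (-1 : ℝ) ^ (n ^ 2) := by
    rw [hf]
    norm_cast
  rw [xEx, if_pos ht, this, hf]
  rcases Nat.even_or_odd n with he | ho
  · rw [if_pos he, (Nat.even_pow.mpr ⟨he, two_ne_zero⟩).neg_one_pow]
    rcases Nat.eq_zero_or_pos n with h0 | h0
    · subst h0; norm_num
    · have hn0 : (0:ℝ) < (n:ℝ) := by exact_mod_cast h0
      push_cast
      rw [div_eq_div_iff (by positivity) (by positivity)]; ring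
  · rw [if_neg (Nat.not_even_iff_odd.mpr ho), (ho.pow).neg_one_pow]
    norm_num

lemma floor_eq_xEx {n : ℕ} (hn : 1 ≤ n) {t : ℝ} (h1 : 1 - 1 / n ≤ t)
    (h2 : t < 1 - 1 / ((n : ℝ) + 1)) : ⌊1 / (1 - t)⌋ = (n : ℤ) := by
  have hn0 : (0 : ℝ) < n := by exact_mod_cast hn
  have hn1 : (0 : ℝ) < (n : ℝ) + 1 := by linarith
  have ht1 : 1 / ((n : ℝ) + 1) < 1 - t := by linarith
  have ht0 : 0 < 1 - t := lt_trans (by positivity) ht1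
  have hub : 1 / (1 - t) < (n : ℝ) + 1 := by
    rw [div_lt_iff₀ ht0]
    calc (1:ℝ) = ((n:ℝ)+1) * (1/((n:ℝ)+1)) := by field_simp
    _ < ((n:ℝ)+1) * (1 - t) := by apply mul_lt_mul_of_pos_left ht1 hn1
  have hlb : (n : ℝ) ≤ 1 / (1 - t) := by
    rw [le_div_iff₀ ht0]
    have : 1 - t ≤ 1 / n := by linarith
    calc (n:ℝ) * (1-t) ≤ (n:ℝ) * (1/n) := by apply mul_le_mul_of_nonneg_left this hn0.le
    _ = 1 := by field_simp
  rw [Int.floor_eq_iff]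
  constructor
  · exact_mod_cast hlb
  · push_cast; exact hub

lemma xEx_floor_nonneg {t : ℝ} (ht : t < 1) : 0 ≤ ⌊1 / (1 - t)⌋ :=
  Int.floor_nonneg.mpr (div_nonneg one_pos.le (by linarith))

lemma xEx_lt_next {t : ℝ} (ht : t < 1) :
    t < 1 - 1 / ((⌊1 / (1 - t)⌋ : ℝ) + 1) := by
  have ht0 : 0 < 1 - t := by linarith
  have h1 : 1 / (1 - t) < (⌊1 / (1 - t)⌋ : ℝ) + 1 := Int.lt_floor_add_one _
  have h2 : (0:ℝ) < (⌊1 / (1 - t)⌋ : ℝ) + 1 := by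
    have := xEx_floor_nonneg ht
    have : (0:ℝ) ≤ (⌊1 / (1 - t)⌋ : ℝ) := by exact_mod_cast this
    linarith
  have : 1 / ((⌊1 / (1 - t)⌋ : ℝ) + 1) < 1 - t := by
    rw [div_lt_iff₀ h2]
    rw [div_lt_iff₀ ht0] at h1
    linarith [mul_comm (1-t) ((⌊1 / (1 - t)⌋ : ℝ) + 1)]
  linarith

lemma xEx_floor_ge {t : ℝ} (ht : t < 1) (h0 : 0 < ⌊1 / (1 - t)⌋) :
    1 - 1 / ((⌊1 / (1 - t)⌋ : ℝ)) ≤ t := by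
  have ht0 : 0 < 1 - t := by linarith
  · have h0' : (0:ℝ) < (⌊1 / (1 - t)⌋ : ℝ) := by exact_mod_cast h0
    have h1 : (⌊1 / (1 - t)⌋ : ℝ) ≤ 1 / (1 - t) := Int.floor_le _
    have : 1 / ((⌊1 / (1 - t)⌋ : ℝ)) ≥ 1 - t := by
      rw [ge_iff_le, le_div_iff₀ h0']
      rw [le_div_iff₀ ht0] at h1
      linarith [mul_comm (1-t) ((⌊1 / (1 - t)⌋ : ℝ))]
    linarith

lemma xEx_const_right {t s : ℝ} (ht : t < 1) (hts : t ≤ s)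
    (hs : s < 1 - 1 / ((⌊1 / (1 - t)⌋ : ℝ) + 1)) : xEx s = xEx t := by
  have hpos : (0:ℝ) < (⌊1 / (1 - t)⌋ : ℝ) + 1 := by
    have := xEx_floor_nonneg ht
    have : (0:ℝ) ≤ (⌊1 / (1 - t)⌋ : ℝ) := by exact_mod_cast this
    linarith
  have hs1pos : 0 < 1 - s := by
    have : 1 / ((⌊1 / (1 - t)⌋ : ℝ) + 1) > 0 := by positivity
    linarith
  have hs1 : s < 1 := by linarith
  have hfloor : ⌊1 / (1 - s)⌋ = ⌊1 / (1 - t)⌋ := by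
    have ht0 : 0 < 1 - t := by linarith
    have hmono : 1 / (1 - t) ≤ 1 / (1 - s) :=
      one_div_le_one_div_of_le hs1pos (by linarith)
    rw [Int.floor_eq_iff]
    refine ⟨le_trans (Int.floor_le _) hmono, ?_⟩
    have : 1 / ((⌊1 / (1 - t)⌋ : ℝ) + 1) < 1 - s := by linarith
    push_cast
    rw [div_lt_iff₀ hs1pos]
    calc (1:ℝ) = ((⌊1 / (1 - t)⌋ : ℝ) + 1) * (1/((⌊1 / (1 - t)⌋ : ℝ) + 1)) := by field_simp
    _ < ((⌊1 / (1 - t)⌋ : ℝ) + 1) * (1 - s) := mul_lt_mul_of_pos_left this hpos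
  rw [xEx, xEx, if_pos ht, if_pos hs1, hfloor]

lemma xEx_zero_of_lt_half {t : ℝ} (ht : t < 1/2) : xEx t = 0 := by
  rcases lt_or_ge t 0 with h | h
  · have ht1 : t < 1 := by linarith
    have h1 : 0 < 1 - t := by linarith
    have hfl : ⌊1 / (1 - t)⌋ = 0 := by
      rw [Int.floor_eq_iff]
      constructor
      · push_cast; positivity
      · push_cast
        rw [div_lt_iff₀ h1]
        linarith
    rw [xEx_eval ht1 hfl]
    norm_num
  · have hfl : ⌊1 / (1 - t)⌋ = ((1:ℕ) : ℤ) := by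
      apply floor_eq_xEx le_rfl
      · push_cast; linarith
      · push_cast; linarith
    rw [xEx_eval (by linarith) hfl]
    norm_num

lemma xEx_nonneg (t : ℝ) : 0 ≤ xEx t := by
  rcases lt_or_ge t 1 with ht | ht
  · obtain ⟨n, hn⟩ : ∃ n : ℕ, ⌊1 / (1 - t)⌋ = (n : ℤ) :=
      ⟨⌊1 / (1 - t)⌋.toNat, (Int.toNat_of_nonneg (xEx_floor_nonneg ht)).symm⟩
    rw [xEx_eval ht hn]
    split <;> positivity
  · rw [xEx, if_neg (not_lt.mpr ht)]

lemma xEx_le_bound {t : ℝ} (h1 : 1/2 ≤ t) (h2 : t < 1) : xEx t ≤ 2 * (1 - t) := by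
  have ht0 : 0 < 1 - t := by linarith
  have hge2 : (2:ℝ) ≤ 1 / (1 - t) := by
    rw [le_div_iff₀ ht0]; linarith
  obtain ⟨n, hn⟩ : ∃ n : ℕ, ⌊1 / (1 - t)⌋ = (n : ℤ) :=
    ⟨⌊1 / (1 - t)⌋.toNat, (Int.toNat_of_nonneg (xEx_floor_nonneg h2)).symm⟩
  have hnge : (2:ℝ) ≤ (n:ℝ) := by
    have : (2:ℤ) ≤ ⌊1 / (1 - t)⌋ := Int.le_floor.mpr (by exact_mod_cast hge2)
    rw [hn] at this; exact_mod_cast this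
  have hnpos : (0:ℝ) < (n:ℝ) := by linarith
  have hkey : 1 / (2 * (1 - t)) < (n:ℝ) := by
    have hfl : ((n:ℝ)) > 1 / (1 - t) - 1 := by
      have := Int.lt_floor_add_one (1 / (1 - t))
      rw [hn] at this
      push_cast at this
      linarith
    have : 1 / (1 - t) - 1 ≥ 1 / (2 * (1 - t)) := by
      rw [show (2:ℝ) * (1 - t) = (1-t) * 2 by ring, ← div_div]
      linarith
    linarith
  have hb : 1 / (n:ℝ) < 2 * (1 - t) := by
    rw [div_lt_iff₀ hnpos]
    rw [div_lt_iff₀ (by linarith : (0:ℝ) < 2 * (1 - t))] at hkey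
    linarith [mul_comm (2*(1-t)) (n:ℝ)]
  rw [xEx_eval h2 hn]
  have hsq : 1 / (n:ℝ)^2 ≤ 1 / (n:ℝ) := by
    apply div_le_div_of_nonneg_left one_pos.le hnpos
    nlinarith
  split
  · linarith
  · linarith

lemma xEx_right_cont : ∀ u : ℝ, Tendsto xEx (nhdsWithin u (Ici u)) (nhds (xEx u)) := by
  intro u
  rcases lt_or_ge u 1 with hu | hu
  · have hc : u < 1 - 1 / ((⌊1 / (1 - u)⌋ : ℝ) + 1) := xEx_lt_next hu
    have hmem : Ico u (1 - 1 / ((⌊1 / (1 - u)⌋ : ℝ) + 1)) ∈ nhdsWithin u (Ici u) :=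
      Ico_mem_nhdsGE hc
    apply Tendsto.congr' (f₁ := fun _ => xEx u) _ tendsto_const_nhds
    filter_upwards [hmem] with s hs
    exact (xEx_const_right hu hs.1 hs.2).symm
  · have hmem : Ici u ∈ nhdsWithin u (Ici u) := self_mem_nhdsWithin
    have hxu : xEx u = 0 := by rw [xEx, if_neg (not_lt.mpr hu)]
    rw [hxu]
    apply Tendsto.congr' (f₁ := fun _ => (0:ℝ)) _ tendsto_const_nhds
    filter_upwards [hmem] with s hs
    rw [xEx, if_neg (not_lt.mpr (le_trans hu hs))]

lemma xEx_left_lim : ∀ u : ℝ, ∃ l : ℝ, Tendsto xEx (nhdsWithin u (Iio u)) (nhds l) := by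
  intro u
  rcases le_or_gt u (1/2) with hu | hu
  · refine ⟨0, ?_⟩
    apply Tendsto.congr' (f₁ := fun _ => (0:ℝ)) _ tendsto_const_nhds
    filter_upwards [self_mem_nhdsWithin] with s hs
    exact (xEx_zero_of_lt_half (lt_of_lt_of_le hs hu)).symm
  rcases lt_trichotomy u 1 with hu1 | hu1 | hu1
  · -- 1/2 < u < 1
    have hfl2 : (2:ℤ) ≤ ⌊1 / (1 - u)⌋ := by
      apply Int.le_floor.mpr
      push_cast
      rw [le_div_iff₀ (by linarith)]
      linarith
    obtain ⟨n, hn⟩ : ∃ n : ℕ, ⌊1 / (1 - u)⌋ = (n : ℤ) :=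
      ⟨⌊1 / (1 - u)⌋.toNat, (Int.toNat_of_nonneg (xEx_floor_nonneg hu1)).symm⟩
    have hn2 : 2 ≤ n := by rw [hn] at hfl2; exact_mod_cast hfl2
    have hge : 1 - 1 / (n:ℝ) ≤ u := by
      have := xEx_floor_ge hu1 (by rw [hn]; positivity)
      rwa [hn] at this
    rcases eq_or_lt_of_le hge with heq | hlt
    · -- u = 1 - 1/n : left interval has floor n - 1
      refine ⟨xEx (1 - 1/((n:ℝ) - 1)), ?_⟩
      have hn1 : (1:ℝ) ≤ (n:ℝ) - 1 := by
        have : (2:ℝ) ≤ (n:ℝ) := by exact_mod_cast hn2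
        linarith
      have hlow : 1 - 1/((n:ℝ) - 1) < u := by
        rw [← heq]
        have h1 : (0:ℝ) < (n:ℝ) - 1 := by linarith
        have h2 : (0:ℝ) < (n:ℝ) := by linarith
        have : 1/(n:ℝ) < 1/((n:ℝ)-1) := by
          apply one_div_lt_one_div_of_lt h1; linarith
        linarith
      refine Tendsto.congr' (f₁ := fun _ => xEx (1 - 1/((n:ℝ) - 1))) ?_ tendsto_const_nhds
      filter_upwards [Ioo_mem_nhdsLT hlow] with s hs
      -- xEx s = xEx (1 - 1/(n-1)) since both have floor n-1
      have hbase : (1:ℝ) - 1/((n:ℝ) - 1) < 1 := by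
        have : (0:ℝ) < 1/((n:ℝ)-1) := by positivity
        linarith
      have hfb : ⌊1 / (1 - (1 - 1/((n:ℝ) - 1)))⌋ = ((n - 1 : ℕ) : ℤ) := by
        apply floor_eq_xEx (by omega)
        · push_cast [Nat.cast_sub (by omega : 1 ≤ n)]
          exact le_rfl
        · push_cast [Nat.cast_sub (by omega : 1 ≤ n)]
          have h1 : (0:ℝ) < (n:ℝ) - 1 := by linarith
          have : 1/(n:ℝ) < 1/((n:ℝ)-1) := by
            apply one_div_lt_one_div_of_lt h1; linarith
          have he : (n:ℝ) - 1 + 1 = (n:ℝ) := by ring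
          rw [he]
          linarith
      refine (xEx_const_right hbase hs.1.le ?_).symm
      rw [hfb]
      push_cast [Nat.cast_sub (by omega : 1 ≤ n)]
      have he : (n:ℝ) - 1 + 1 = (n:ℝ) := by ring
      rw [he]
      calc s < u := hs.2
      _ = 1 - 1/(n:ℝ) := heq.symm
    · -- 1 - 1/n < u : constant on (1-1/n, u)
      refine ⟨xEx (1 - 1/(n:ℝ)), ?_⟩
      refine Tendsto.congr' (f₁ := fun _ => xEx (1 - 1/(n:ℝ))) ?_ tendsto_const_nhds
      filter_upwards [Ioo_mem_nhdsLT hlt] with s hs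
      have hbase : (1:ℝ) - 1/(n:ℝ) < 1 := by
        have : (0:ℝ) < 1/(n:ℝ) := by positivity
        linarith
      have hfb : ⌊1 / (1 - (1 - 1/(n:ℝ)))⌋ = (n : ℤ) := by
        apply floor_eq_xEx (by omega)
        · exact le_rfl
        · have hn0 : (0:ℝ) < (n:ℝ) := by positivity
          have : 1/((n:ℝ)+1) < 1/(n:ℝ) := by
            apply one_div_lt_one_div_of_lt hn0; linarith
          linarith
      refine (xEx_const_right hbase hs.1.le ?_).symm
      rw [hfb]
      have hnext := xEx_lt_next hu1
      rw [hn] at hnext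
      push_cast at hnext ⊢
      linarith [hs.2]
  · -- u = 1 : squeeze
    refine ⟨0, ?_⟩
    subst hu1
    have h2 : Tendsto (fun t : ℝ => 2 * (1 - t)) (nhdsWithin 1 (Iio 1)) (nhds 0) := by
      have h : Tendsto (fun t : ℝ => 2 * (1 - t)) (nhds 1) (nhds (2 * (1 - 1))) :=
        (Continuous.mul continuous_const (continuous_const.sub continuous_id)).tendsto 1
      norm_num at h
      exact h.mono_left nhdsWithin_le_nhds
    apply squeeze_zero' _ _ h2
    · filter_upwards with t using xEx_nonneg t
    · filter_upwards [Ioo_mem_nhdsLT (by norm_num : (1:ℝ)/2 < 1)] with t ht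
      exact xEx_le_bound ht.1.le ht.2
  · -- u > 1
    refine ⟨0, ?_⟩
    apply Tendsto.congr' (f₁ := fun _ => (0:ℝ)) _ tendsto_const_nhds
    filter_upwards [Ioo_mem_nhdsLT hu1] with s hs
    rw [xEx, if_neg (not_lt.mpr hs.1.le)]

/-! ### Variation -/

lemma evar_sub_le (f g : ℝ → ℝ) (s : Set ℝ) :
    eVariationOn (fun t => f t - g t) s ≤ eVariationOn f s + eVariationOn g s := by
  rw [eVariationOn]
  apply iSup_le
  rintro ⟨n, ⟨u, hu, us⟩⟩
  calc (∑ i ∈ Finset.range n, edist (f (u (i+1)) - g (u (i+1))) (f (u i) - g (u i)))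
      ≤ ∑ i ∈ Finset.range n,
        (edist (f (u (i+1))) (f (u i)) + edist (g (u (i+1))) (g (u i))) := by
        apply Finset.sum_le_sum
        intro i _
        rw [edist_dist, edist_dist, edist_dist, ← ENNReal.ofReal_add dist_nonneg dist_nonneg]
        apply ENNReal.ofReal_le_ofReal
        rw [Real.dist_eq, Real.dist_eq, Real.dist_eq]
        calc |f (u (i+1)) - g (u (i+1)) - (f (u i) - g (u i))|
            = |(f (u (i+1)) - f (u i)) + (-(g (u (i+1)) - g (u i)))| := by ring_nf
          _ ≤ |f (u (i+1)) - f (u i)| + |(-(g (u (i+1)) - g (u i)))| := abs_add_le _ _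
          _ = |f (u (i+1)) - f (u i)| + |g (u (i+1)) - g (u i)| := by rw [abs_neg]
    _ = (∑ i ∈ Finset.range n, edist (f (u (i+1))) (f (u i)))
        + ∑ i ∈ Finset.range n, edist (g (u (i+1))) (g (u i)) := Finset.sum_add_distrib
    _ ≤ eVariationOn f s + eVariationOn g s :=
        add_le_add (eVariationOn.sum_le (f := f) (n := n) hu us) (eVariationOn.sum_le (f := g) (n := n) hu us)

def jmp : ℕ → ℝ := fun k => 1 / (2 * ((k:ℝ) + 1)) ^ 2

lemma jmp_nonneg (k : ℕ) : 0 ≤ jmp k := by rw [jmp]; positivity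

lemma jmp_summable : Summable jmp := by
  have h : Summable (fun k : ℕ => (1:ℝ) / ((k:ℝ) + 1) ^ 2) := by
    have := (Real.summable_one_div_nat_pow (p := 2)).mpr one_lt_two
    have h2 := (summable_nat_add_iff (f := fun n : ℕ => (1:ℝ) / (n:ℝ) ^ 2) 1).mpr this
    simpa using h2
  apply Summable.of_nonneg_of_le jmp_nonneg _ h
  intro k
  rw [jmp]
  apply div_le_div_of_nonneg_left one_pos.le (by positivity)
  nlinarith [sq_nonneg ((k:ℝ)+1)]

def Sx : ℕ → ℝ := fun m => ∑ k ∈ Finset.range m, jmp k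
def Lx : ℝ := ∑' k, jmp k

lemma Sx_mono : Monotone Sx := fun a b hab =>
  Finset.sum_le_sum_of_subset_of_nonneg (Finset.range_subset_range.mpr hab)
    (fun k _ _ => jmp_nonneg k)

lemma Sx_le_Lx (m : ℕ) : Sx m ≤ Lx := jmp_summable.sum_le_tsum _ (fun k _ => jmp_nonneg k)

def Ax : ℝ → ℝ := fun t => if t < 1 then Sx ((⌊1 / (1 - t)⌋.toNat) / 2) else Lx
def Bx : ℝ → ℝ := fun t => if t < 1 then Sx (((⌊1 / (1 - t)⌋.toNat) - 1) / 2) else Lx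

lemma floor_mono_xEx {s t : ℝ} (hst : s ≤ t) (ht : t < 1) :
    ⌊1 / (1 - s)⌋ ≤ ⌊1 / (1 - t)⌋ := by
  apply Int.floor_mono
  apply one_div_le_one_div_of_le (by linarith) (by linarith)

lemma Ax_mono : Monotone Ax := by
  intro s t hst
  simp only [Ax]
  rcases lt_or_ge t 1 with ht | ht
  · rw [if_pos ht, if_pos (lt_of_le_of_lt hst ht)]
    apply Sx_mono
    have := floor_mono_xEx hst ht
    omega
  · rw [if_neg (not_lt.mpr ht)]
    rcases lt_or_ge s 1 with hs | hs
    · rw [if_pos hs]; exact Sx_le_Lx _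
    · rw [if_neg (not_lt.mpr hs)]

lemma Bx_mono : Monotone Bx := by
  intro s t hst
  simp only [Bx]
  rcases lt_or_ge t 1 with ht | ht
  · rw [if_pos ht, if_pos (lt_of_le_of_lt hst ht)]
    apply Sx_mono
    have := floor_mono_xEx hst ht
    omega
  · rw [if_neg (not_lt.mpr ht)]
    rcases lt_or_ge s 1 with hs | hs
    · rw [if_pos hs]; exact Sx_le_Lx _
    · rw [if_neg (not_lt.mpr hs)]

lemma xEx_eq_sub {t : ℝ} (ht : 0 ≤ t) : xEx t = Ax t - Bx t := by
  rcases lt_or_ge t 1 with ht1 | ht1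
  · obtain ⟨n, hn⟩ : ∃ n : ℕ, ⌊1 / (1 - t)⌋ = (n : ℤ) :=
      ⟨⌊1 / (1 - t)⌋.toNat, (Int.toNat_of_nonneg (xEx_floor_nonneg ht1)).symm⟩
    have hn1 : 1 ≤ n := by
      have : (1:ℤ) ≤ ⌊1 / (1 - t)⌋ := by
        apply Int.le_floor.mpr
        push_cast
        rw [le_div_iff₀ (by linarith)]
        linarith
      omega
    have htn : ⌊1 / (1 - t)⌋.toNat = n := by omega
    rw [xEx_eval ht1 hn, Ax, Bx, if_pos ht1, if_pos ht1, htn]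
    rcases Nat.even_or_odd n with he | ho
    · obtain ⟨m, hm⟩ := he
      have hm' : n = 2 * m := by omega
      have hm1 : 1 ≤ m := by omega
      have he' : Even n := ⟨m, hm⟩
      rw [if_pos he', hm']
      have e1 : 2 * m / 2 = m := by omega
      have e2 : (2 * m - 1) / 2 = m - 1 := by omega
      rw [e1, e2]
      obtain ⟨j, hj⟩ : ∃ j, m = j + 1 := ⟨m - 1, by omega⟩
      subst hj
      have e3 : j + 1 - 1 = j := by omega
      rw [e3, Sx, Sx, Finset.sum_range_succ]
      rw [jmp]
      push_cast [hm']
      ring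
    · obtain ⟨m, hm⟩ := ho
      have ho' : ¬ Even n := Nat.not_even_iff_odd.mpr ⟨m, hm⟩
      rw [if_neg ho', hm]
      have e1 : (2 * m + 1) / 2 = m := by omega
      have e2 : (2 * m + 1 - 1) / 2 = m := by omega
      rw [e1, e2]
      ring
  · rw [xEx, if_neg (not_lt.mpr ht1), Ax, Bx, if_neg (not_lt.mpr ht1),
      if_neg (not_lt.mpr ht1)]
    ring

lemma xEx_evar : eVariationOn xEx (Icc 0 1) ≠ ⊤ := by
  have heq : eVariationOn xEx (Icc 0 1) = eVariationOn (fun t => Ax t - Bx t) (Icc 0 1) := by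
    apply eVariationOn.eq_of_eqOn
    intro t ht
    exact xEx_eq_sub ht.1
  rw [heq]
  have hA : eVariationOn Ax (Icc 0 1) ≤ ENNReal.ofReal (Ax 1 - Ax 0) := by
    have := (Ax_mono.monotoneOn (Icc (0:ℝ) 1)).eVariationOn_le
      (Set.left_mem_Icc.mpr zero_le_one) (Set.right_mem_Icc.mpr zero_le_one)
    rwa [Set.inter_self] at this
  have hB : eVariationOn Bx (Icc 0 1) ≤ ENNReal.ofReal (Bx 1 - Bx 0) := by
    have := (Bx_mono.monotoneOn (Icc (0:ℝ) 1)).eVariationOn_le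
      (Set.left_mem_Icc.mpr zero_le_one) (Set.right_mem_Icc.mpr zero_le_one)
    rwa [Set.inter_self] at this
  apply ne_top_of_le_ne_top _ (evar_sub_le Ax Bx (Icc 0 1))
  exact ENNReal.add_ne_top.mpr
    ⟨ne_top_of_le_ne_top ENNReal.ofReal_ne_top hA, ne_top_of_le_ne_top ENNReal.ofReal_ne_top hB⟩

/-! ### Jumps -/


def uPt : ℕ → ℝ := fun k => 1 - 1 / (2 * ((k:ℝ) + 1))

lemma uPt_denom_pos (k : ℕ) : (0:ℝ) < 2 * ((k:ℝ) + 1) := by positivity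

lemma uPt_mem (k : ℕ) : uPt k ∈ Ioc (0:ℝ) 1 := by
  have h1 : 1 / (2 * ((k:ℝ) + 1)) ≤ 1/2 := by
    apply div_le_div_of_nonneg_left one_pos.le two_pos
    have : (0:ℝ) ≤ (k:ℝ) := Nat.cast_nonneg k
    linarith
  have h2 : (0:ℝ) < 1 / (2 * ((k:ℝ) + 1)) := by positivity
  constructor
  · rw [uPt]; linarith
  · rw [uPt]; linarith

lemma uPt_floor (k : ℕ) : ⌊1 / (1 - uPt k)⌋ = ((2 * (k + 1) : ℕ) : ℤ) := by
  apply floor_eq_xEx (by omega)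
  · rw [uPt]; push_cast; ring_nf; exact le_rfl
  · rw [uPt]
    push_cast
    have h2 : (0:ℝ) < 2 * ((k:ℝ) + 1) := uPt_denom_pos k
    have : 1 / (2 * ((k:ℝ) + 1) + 1) < 1 / (2 * ((k:ℝ) + 1)) := by
      apply one_div_lt_one_div_of_lt h2; linarith
    ring_nf at this ⊢
    linarith

lemma uPt_lt_one (k : ℕ) : uPt k < 1 := by
  have h2 : (0:ℝ) < 1 / (2 * ((k:ℝ) + 1)) := by positivity
  rw [uPt]; linarith

lemma xEx_uPt (k : ℕ) : xEx (uPt k) = 1 / (2 * ((k:ℝ) + 1)) ^ 2 := by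
  rw [xEx_eval (uPt_lt_one k) (uPt_floor k), if_pos ⟨k + 1, by ring⟩]
  push_cast
  ring_nf

lemma leftLim_uPt (k : ℕ) : Function.leftLim xEx (uPt k) = 0 := by
  have hdp : (0:ℝ) < 2 * (k:ℝ) + 1 := by positivity
  have hlow : 1 - 1 / (2 * (k:ℝ) + 1) < uPt k := by
    rw [uPt]
    have : 1 / (2 * ((k:ℝ) + 1)) < 1 / (2 * (k:ℝ) + 1) := by
      apply one_div_lt_one_div_of_lt hdp; linarith
    linarith
  apply leftLim_eq_of_tendsto
  refine Tendsto.congr' (f₁ := fun _ => (0:ℝ)) ?_ tendsto_const_nhds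
  filter_upwards [Ioo_mem_nhdsLT hlow] with s hs
  have hfl : ⌊1 / (1 - s)⌋ = ((2 * k + 1 : ℕ) : ℤ) := by
    apply floor_eq_xEx (by omega)
    · push_cast; linarith [hs.1]
    · push_cast
      have : s < uPt k := hs.2
      rw [uPt] at this
      ring_nf at this ⊢
      linarith
  have hs1 : s < 1 := lt_trans hs.2 (uPt_lt_one k)
  rw [xEx_eval hs1 hfl, if_neg]
  intro he
  rw [Nat.even_iff] at he
  omega

lemma fEx_jump_uPt (k : ℕ) :
    fEx (xEx (uPt k)) - fEx (Function.leftLim xEx (uPt k)) = 1 / (2 * ((k:ℝ) + 1)) := by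
  rw [xEx_uPt, leftLim_uPt]
  have h2 : (0:ℝ) < 2 * ((k:ℝ) + 1) := uPt_denom_pos k
  rw [fEx, fEx]
  rw [if_pos (by positivity : (0:ℝ) ≤ 1 / (2 * ((k:ℝ) + 1)) ^ 2)]
  rw [if_pos le_rfl, Real.sqrt_zero]
  rw [one_div, Real.sqrt_inv, Real.sqrt_sq h2.le]
  rw [one_div]
  ring

lemma harmonic_ofReal_top : (∑' k : ℕ, ENNReal.ofReal (1 / (2 * ((k:ℝ) + 1)))) = ⊤ := by
  by_contra h
  have hs : Summable (fun k : ℕ => Real.toNNReal (1 / (2 * ((k:ℝ) + 1)))) :=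
    ENNReal.tsum_coe_ne_top_iff_summable.mp h
  have hs' : Summable (fun k : ℕ => (1 / (2 * ((k:ℝ) + 1)))) := by
    have h2 := NNReal.summable_coe.mpr hs
    refine h2.congr fun k => ?_
    rw [Real.coe_toNNReal]
    positivity
  have hh : Summable (fun k : ℕ => 1 / ((k:ℝ) + 1)) := by
    have h3 := hs'.mul_left 2
    refine h3.congr fun k => ?_
    have h2 : (0:ℝ) < 2 * ((k:ℝ) + 1) := uPt_denom_pos k
    field_simp
  have := (summable_nat_add_iff (f := fun n : ℕ => 1 / (n:ℝ)) 1).mp (by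
    refine hh.congr fun k => ?_
    push_cast
    ring_nf)
  exact Real.not_summable_one_div_natCast this

def uInc : ℕ → Ioc (0:ℝ) 1 := fun k => ⟨uPt k, uPt_mem k⟩

lemma uInc_injective : Injective uInc := by
  intro a b hab
  have h := congrArg Subtype.val hab
  simp only [uInc, uPt] at h
  have ha : (0:ℝ) < 2 * ((a:ℝ) + 1) := uPt_denom_pos a
  have hb : (0:ℝ) < 2 * ((b:ℝ) + 1) := uPt_denom_pos b
  have h2 : 1 / (2 * ((a:ℝ) + 1)) = 1 / (2 * ((b:ℝ) + 1)) := by linarith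
  rw [div_eq_div_iff ha.ne' hb.ne'] at h2
  have : (a:ℝ) = (b:ℝ) := by linarith
  exact_mod_cast this

lemma jump_tsum_top :
    (∑' u : Ioc (0:ℝ) 1, ENNReal.ofReal (fEx (xEx u) - fEx (Function.leftLim xEx u))) = ⊤ := by
  apply top_le_iff.mp
  calc (⊤ : ℝ≥0∞) = ∑' k : ℕ, ENNReal.ofReal (1 / (2 * ((k:ℝ) + 1))) :=
      harmonic_ofReal_top.symm
    _ = ∑' k : ℕ, ENNReal.ofReal (fEx (xEx (uInc k)) - fEx (Function.leftLim xEx (uInc k))) := by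
      congr 1
      funext k
      rw [show ((uInc k : Ioc (0:ℝ) 1) : ℝ) = uPt k from rfl, fEx_jump_uPt]
    _ ≤ _ := ENNReal.tsum_comp_le_tsum_of_injective uInc_injective _

lemma jump_not_summable :
    ¬ Summable (fun u : Ioc (0:ℝ) 1 => fEx (xEx u) - fEx (Function.leftLim xEx u)) := by
  intro h
  have habs : Summable (fun u : Ioc (0:ℝ) 1 => |fEx (xEx u) - fEx (Function.leftLim xEx u)|) :=
    summable_abs_iff.mpr h
  have h1 : (∑' u : Ioc (0:ℝ) 1, ENNReal.ofReal (fEx (xEx u) - fEx (Function.leftLim xEx u)))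
      ≤ ∑' u : Ioc (0:ℝ) 1, ENNReal.ofReal (|fEx (xEx u) - fEx (Function.leftLim xEx u)|) :=
    ENNReal.tsum_le_tsum fun u => ENNReal.ofReal_le_ofReal (le_abs_self _)
  rw [← ENNReal.ofReal_tsum_of_nonneg (fun u => abs_nonneg _) habs] at h1
  rw [jump_tsum_top] at h1
  exact (lt_of_le_of_lt h1 ENNReal.ofReal_lt_top).ne rfl

/-! ### FTC and Lipschitz -/

lemma fEx_integral (y : ℝ) :
    fEx y = ∫ z in (0:ℝ)..y, (if 0 < z then 1 / (2 * Real.sqrt z) else 0) := by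
  rcases le_or_gt y 0 with hy | hy
  · have hI : ∫ z in (0:ℝ)..y, (if 0 < z then 1 / (2 * Real.sqrt z) else 0)
        = ∫ z in (0:ℝ)..y, (0:ℝ) := by
      apply intervalIntegral.integral_congr
      intro z hz
      rw [uIcc_of_ge hy] at hz
      simp only [if_neg (not_lt.mpr hz.2)]
    rw [hI, intervalIntegral.integral_zero, fEx]
    rcases eq_or_lt_of_le hy with h0 | h0
    · rw [if_pos (le_of_eq h0.symm), h0, Real.sqrt_zero]
    · rw [if_neg (not_le.mpr h0)]
  · have hint : IntervalIntegrable (fun z => if 0 < z then 1 / (2 * Real.sqrt z) else 0)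
        volume 0 y := by
      rw [intervalIntegrable_iff_integrableOn_Ioc_of_le hy.le]
      have hbase : IntegrableOn (fun z : ℝ => (1/2) * z ^ (-(1:ℝ)/2)) (Ioc 0 y) volume := by
        have h1 : IntervalIntegrable (fun z : ℝ => z ^ (-(1:ℝ)/2)) volume 0 y :=
          intervalIntegral.intervalIntegrable_rpow' (by norm_num)
        rw [intervalIntegrable_iff_integrableOn_Ioc_of_le hy.le] at h1
        exact h1.const_mul _
      apply hbase.congr_fun _ measurableSet_Ioc
      intro z hz
      simp only [if_pos hz.1]
      rw [Real.sqrt_eq_rpow]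
      rw [show -(1:ℝ)/2 = -(1/2) by norm_num, Real.rpow_neg hz.1.le]
      have hz2 : z ^ ((1:ℝ)/2) ≠ 0 := by
        apply ne_of_gt
        exact Real.rpow_pos_of_pos hz.1 _
      field_simp
    have := intervalIntegral.integral_eq_sub_of_hasDeriv_right_of_le hy.le
      (Real.continuous_sqrt.continuousOn)
      (fun z hz => ?_) hint
    · rw [this, Real.sqrt_zero, sub_zero, fEx, if_pos hy.le]
    · rw [if_pos hz.1]
      exact (Real.hasDerivAt_sqrt hz.1.ne').hasDerivWithinAt

lemma fEx_not_lipschitz : ¬ ∃ C : ℝ≥0, LipschitzOnWith C fEx (Icc 0 1) := by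
  rintro ⟨C, hC⟩
  set M : ℝ := max 1 (C:ℝ) with hM
  have hM1 : (1:ℝ) ≤ M := le_max_left _ _
  have hMC : (C:ℝ) ≤ M := le_max_right _ _
  set ε : ℝ := 1 / (M + 1) with hε
  have hεpos : 0 < ε := by positivity
  have hε1 : ε ≤ 1/2 := by
    rw [hε]
    apply div_le_div_of_nonneg_left one_pos.le two_pos
    linarith
  have hz : ε ^ 2 ∈ Icc (0:ℝ) 1 := by
    constructor
    · positivity
    · nlinarith
  have h0 : (0:ℝ) ∈ Icc (0:ℝ) 1 := by constructor <;> norm_num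
  have hd := hC.dist_le_mul _ hz _ h0
  rw [Real.dist_eq, Real.dist_eq, sub_zero] at hd
  have hfz : fEx (ε ^ 2) = ε := by
    rw [fEx, if_pos (by positivity : (0:ℝ) ≤ ε^2), Real.sqrt_sq hεpos.le]
  have hf0 : fEx 0 = 0 := by rw [fEx, if_pos le_rfl, Real.sqrt_zero]
  rw [hfz, hf0, sub_zero, abs_of_pos hεpos, abs_of_pos (by positivity : (0:ℝ) < ε^2)] at hd
  -- ε ≤ C * ε², so 1 ≤ C * ε ≤ M/(M+1) < 1
  have h1 : 1 ≤ (C:ℝ) * ε := by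
    have := mul_le_mul_of_nonneg_left hd (le_of_lt (by positivity : (0:ℝ) < 1/ε))
    rw [one_div] at this
    calc (1:ℝ) = ε⁻¹ * ε := by field_simp
    _ ≤ ε⁻¹ * ((C:ℝ) * ε^2) := by
      apply mul_le_mul_of_nonneg_left hd
      positivity
    _ = (C:ℝ) * ε := by field_simp
  have h2 : (C:ℝ) * ε ≤ M / (M + 1) := by
    rw [hε, mul_one_div, div_le_div_iff_of_pos_right (by linarith : (0:ℝ) < M + 1)]
    exact hMC
  have h3 : M / (M + 1) < 1 := by
    rw [div_lt_one (by linarith)]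
    linarith
  linarith


/-- `xEx` is càdlàg with finite variation on `[0,1]`, `fEx` is absolutely
continuous but not Lipschitz near `0`, and the sum of the positive parts of the jumps of
`fEx ∘ xEx` over `(0,1]` is infinite (so the net of jump contributions diverges). -/

theorem counterexample_not_lipschitz :
    Cadlag xEx ∧ eVariationOn xEx (Icc 0 1) ≠ ⊤ ∧
    (∀ y : ℝ, fEx y = ∫ z in (0:ℝ)..y, (if 0 < z then 1 / (2 * Real.sqrt z) else 0)) ∧
    (¬ ∃ C : ℝ≥0, LipschitzOnWith C fEx (Icc 0 1)) ∧
    (¬ Summable (fun u : Ioc (0:ℝ) 1 => fEx (xEx u) - fEx (leftLim xEx u))) ∧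
    (∑' u : Ioc (0:ℝ) 1, ENNReal.ofReal (fEx (xEx u) - fEx (leftLim xEx u))) = ⊤ :=
  ⟨⟨xEx_right_cont, xEx_left_lim⟩, xEx_evar, fEx_integral, fEx_not_lipschitz,
    jump_not_summable, jump_tsum_top⟩
end
end
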